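/- arXiv:0706.2479 — 10 statements merged into one kernel-verified Lean document; each statement's English description precedes it below -/
import Mathlib

section
/- When an active cell of potential v is flipped in a 2D Minority configuration on a torus, the energy of the configuration changes by exactly 8 - 4v; in particular, since active cells have potential at least 2, the energy never increases under the fully asynchronous Minority dynamics. -/
/-- The four von Neumann neighbors of a cell on the `n × m` torus. -/
def nbrs (n m : ℕ) (p : ZMod n × ZMod m) : List (ZMod n × ZMod m) :=
  [(p.1 + 1, p.2), (p.1 - 1, p.2), (p.1, p.2 + 1), (p.1, p.2 - 1)]

/-- The potential of a cell: the number of its four neighbors in the same state. -/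
def potential (n m : ℕ) (c : ZMod n × ZMod m → Bool) (p : ZMod n × ZMod m) : ℕ :=
  ((nbrs n m p).filter (fun q => c q == c p)).length

/-- The energy of a configuration: the sum of the potentials of all cells. -/
def energy (n m : ℕ) [NeZero n] [NeZero m] (c : ZMod n × ZMod m → Bool) : ℕ :=
  ∑ p : ZMod n × ZMod m, potential n m c p

namespace Stmt0Aux

def I (a b : Bool) : ℤ := if a = b then 1 else 0

lemma I_comm (a b : Bool) : I a b = I b a := by
  rcases a <;> rcases b <;> simp [I]

lemma I_not (a b : Bool) : I a (!b) = 1 - I a b := by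
  rcases a <;> rcases b <;> simp [I]

lemma I_not' (a b : Bool) : I (!a) b = 1 - I a b := by
  rcases a <;> rcases b <;> simp [I]

lemma potential_eq (n m : ℕ) (c : ZMod n × ZMod m → Bool) (p : ZMod n × ZMod m) :
    (potential n m c p : ℤ) =
      I (c (p.1 + 1, p.2)) (c p) + I (c (p.1 - 1, p.2)) (c p)
      + I (c (p.1, p.2 + 1)) (c p) + I (c (p.1, p.2 - 1)) (c p) := by
  rcases hp : c p <;> rcases h1 : c (p.1 + 1, p.2) <;> rcases h2 : c (p.1 - 1, p.2) <;>
    rcases h3 : c (p.1, p.2 + 1) <;> rcases h4 : c (p.1, p.2 - 1) <;>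
    simp [potential, nbrs, List.filter, hp, h1, h2, h3, h4, I]

variable {n m : ℕ} [NeZero n] [NeZero m]

def S (e : ZMod n × ZMod m) (c : ZMod n × ZMod m → Bool) : ℤ :=
  ∑ p : ZMod n × ZMod m, I (c (p + e)) (c p)

lemma sum_shift (e : ZMod n × ZMod m) (c : ZMod n × ZMod m → Bool) :
    (∑ p : ZMod n × ZMod m, I (c (p - e)) (c p)) = S e c := by
  rw [S]
  refine Fintype.sum_equiv (Equiv.subRight e) _ _ ?_
  intro q
  simp only [Equiv.subRight_apply, sub_add_cancel]
  exact I_comm _ _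

lemma energy_eq (c : ZMod n × ZMod m → Bool) :
    (energy n m c : ℤ) = 2 * S ((1 : ZMod n), (0 : ZMod m)) c
      + 2 * S ((0 : ZMod n), (1 : ZMod m)) c := by
  have hadd : ∀ p : ZMod n × ZMod m,
      p + ((1 : ZMod n), (0 : ZMod m)) = (p.1 + 1, p.2) ∧
      p - ((1 : ZMod n), (0 : ZMod m)) = (p.1 - 1, p.2) ∧
      p + ((0 : ZMod n), (1 : ZMod m)) = (p.1, p.2 + 1) ∧
      p - ((0 : ZMod n), (1 : ZMod m)) = (p.1, p.2 - 1) := by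
    intro p
    refine ⟨?_, ?_, ?_, ?_⟩ <;> simp [Prod.ext_iff]
  have h1 := sum_shift ((1 : ZMod n), (0 : ZMod m)) c
  have h2 := sum_shift ((0 : ZMod n), (1 : ZMod m)) c
  rw [energy]
  push_cast
  rw [Finset.sum_congr rfl (fun p _ => potential_eq n m c p)]
  rw [Finset.sum_add_distrib, Finset.sum_add_distrib, Finset.sum_add_distrib]
  rw [S, S]
  have e1 : (∑ p : ZMod n × ZMod m, I (c (p.1 + 1, p.2)) (c p))
      = ∑ p : ZMod n × ZMod m, I (c (p + ((1 : ZMod n), (0 : ZMod m)))) (c p) :=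
    Finset.sum_congr rfl (fun p _ => by rw [(hadd p).1])
  have e2 : (∑ p : ZMod n × ZMod m, I (c (p.1 - 1, p.2)) (c p))
      = ∑ p : ZMod n × ZMod m, I (c (p + ((1 : ZMod n), (0 : ZMod m)))) (c p) := by
    rw [Finset.sum_congr rfl (fun p _ => by rw [← (hadd p).2.1])]
    rw [sum_shift]; rfl
  have e3 : (∑ p : ZMod n × ZMod m, I (c (p.1, p.2 + 1)) (c p))
      = ∑ p : ZMod n × ZMod m, I (c (p + ((0 : ZMod n), (1 : ZMod m)))) (c p) :=
    Finset.sum_congr rfl (fun p _ => by rw [(hadd p).2.2.1])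
  have e4 : (∑ p : ZMod n × ZMod m, I (c (p.1, p.2 - 1)) (c p))
      = ∑ p : ZMod n × ZMod m, I (c (p + ((0 : ZMod n), (1 : ZMod m)))) (c p) := by
    rw [Finset.sum_congr rfl (fun p _ => by rw [← (hadd p).2.2.2])]
    rw [sum_shift]; rfl
  rw [e1, e2, e3, e4]; ring

lemma S_flip (e : ZMod n × ZMod m) (he : e ≠ 0) (c : ZMod n × ZMod m → Bool)
    (p0 : ZMod n × ZMod m) :
    S e (Function.update c p0 (!c p0)) =
      S e c + 2 - 2 * I (c (p0 + e)) (c p0) - 2 * I (c p0) (c (p0 - e)) := by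
  classical
  have hne : p0 ≠ p0 - e := by
    intro h
    apply he
    have := sub_eq_self.mp h.symm
    exact this
  have hsub : ({p0, p0 - e} : Finset (ZMod n × ZMod m)) ⊆ Finset.univ :=
    Finset.subset_univ _
  set c' := Function.update c p0 (!c p0) with hc'
  have key : ∀ q : ZMod n × ZMod m, q ∉ ({p0, p0 - e} : Finset (ZMod n × ZMod m)) →
      I (c' (q + e)) (c' q) = I (c (q + e)) (c q) := by
    intro q hq
    simp only [Finset.mem_insert, Finset.mem_singleton, not_or] at hq
    have h1 : q ≠ p0 := hq.1
    have h2 : q + e ≠ p0 := by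
      intro h; exact hq.2 (eq_sub_of_add_eq h)
    rw [hc', Function.update_of_ne h1, Function.update_of_ne h2]
  rw [S, S, ← Finset.sum_sdiff hsub, ← Finset.sum_sdiff hsub]
  rw [Finset.sum_congr rfl (fun q hq => key q (Finset.mem_sdiff.mp hq).2)]
  rw [Finset.sum_pair hne, Finset.sum_pair hne]
  have e1 : c' p0 = !c p0 := Function.update_self _ _ _
  have e2 : c' (p0 + e) = c (p0 + e) := by
    apply Function.update_of_ne
    intro h
    exact he (by simpa using (add_eq_left.mp h))
  have e3 : c' (p0 - e) = c (p0 - e) := Function.update_of_ne hne.symm _ _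
  have e4 : p0 - e + e = p0 := sub_add_cancel p0 e
  rw [e2, e1, e4, e3, e1, I_not, I_not']
  ring

end Stmt0Aux

/-- Flipping a cell of potential `v` changes the energy by exactly `8 - 4v`;
in particular, flipping an active cell (potential `≥ 2`) never increases the energy. -/
theorem stmt0 (n m : ℕ) [NeZero n] [NeZero m] (hn : 2 ≤ n) (hm : 2 ≤ m)
    (c : ZMod n × ZMod m → Bool) (p : ZMod n × ZMod m) :
    (energy n m (Function.update c p (!c p)) : ℤ)
        = (energy n m c : ℤ) + 8 - 4 * (potential n m c p : ℤ) ∧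
    (2 ≤ potential n m c p →
      energy n m (Function.update c p (!c p)) ≤ energy n m c) := by
  classical
  open Stmt0Aux in
  have hn1 : ((1 : ZMod n)) ≠ 0 := by
    haveI : Fact (1 < n) := ⟨hn⟩
    exact one_ne_zero
  have hm1 : ((1 : ZMod m)) ≠ 0 := by
    haveI : Fact (1 < m) := ⟨hm⟩
    exact one_ne_zero
  have heH : ((1 : ZMod n), (0 : ZMod m)) ≠ (0 : ZMod n × ZMod m) := by
    simp [Prod.ext_iff, hn1]
  have heV : ((0 : ZMod n), (1 : ZMod m)) ≠ (0 : ZMod n × ZMod m) := by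
    simp [Prod.ext_iff, hm1]
  have hadd : p + ((1 : ZMod n), (0 : ZMod m)) = (p.1 + 1, p.2) ∧
      p - ((1 : ZMod n), (0 : ZMod m)) = (p.1 - 1, p.2) ∧
      p + ((0 : ZMod n), (1 : ZMod m)) = (p.1, p.2 + 1) ∧
      p - ((0 : ZMod n), (1 : ZMod m)) = (p.1, p.2 - 1) := by
    refine ⟨?_, ?_, ?_, ?_⟩ <;> simp [Prod.ext_iff]
  have hmain : (energy n m (Function.update c p (!c p)) : ℤ)
      = (energy n m c : ℤ) + 8 - 4 * (potential n m c p : ℤ) := by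
    rw [Stmt0Aux.energy_eq, Stmt0Aux.energy_eq (c := c),
      Stmt0Aux.S_flip _ heH c p, Stmt0Aux.S_flip _ heV c p,
      Stmt0Aux.potential_eq, hadd.1, hadd.2.1, hadd.2.2.1, hadd.2.2.2]
    rw [Stmt0Aux.I_comm (c p) (c (p.1 - 1, p.2)), Stmt0Aux.I_comm (c p) (c (p.1, p.2 - 1))]
    ring
  refine ⟨hmain, fun hv => ?_⟩
  have : (energy n m (Function.update c p (!c p)) : ℤ) ≤ (energy n m c : ℤ) := by
    rw [hmain]
    have : (2 : ℤ) ≤ (potential n m c p : ℤ) := by exact_mod_cast hv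
    linarith
  exact_mod_cast this
end

section
/- If n and m are both even, the checkerboard configuration c_{ij} = (i+j) mod 2 on the n×m torus has energy 0, and the only configurations of energy 0 are the two checkerboards. -/
/-- The checkerboard configuration: a cell `(i,j)` is black iff `i + j` is odd. -/
def checkerboard (n m : ℕ) (p : ZMod n × ZMod m) : Bool :=
  decide ((p.1.val + p.2.val) % 2 = 1)

lemma val_add_one_parity {n : ℕ} [NeZero n] (hn : Even n) (x : ZMod n) :
    (x + 1).val % 2 = (x.val + 1) % 2 := by
  obtain ⟨r, rfl⟩ := hn
  have hpos : r + r ≠ 0 := NeZero.ne _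
  have h2 : (2 : ℕ) ∣ r + r := ⟨r, by ring⟩
  rw [ZMod.val_add, ZMod.val_one_eq_one_mod, Nat.one_mod_eq_one.mpr (by omega),
    Nat.mod_mod_of_dvd _ h2]

lemma val_sub_one_parity {n : ℕ} [NeZero n] (hn : Even n) (x : ZMod n) :
    (x - 1).val % 2 = (x.val + 1) % 2 := by
  have h := val_add_one_parity hn (x - 1)
  rw [sub_add_cancel] at h
  omega

lemma bool_xor_not (a b : Bool) : ((!a) ^^ b) = !(a ^^ b) := by cases a <;> cases b <;> rfl

/-- If `n` and `m` are even, the checkerboard has energy 0, and the only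
configurations of energy 0 are the two checkerboards. -/
theorem stmt4 (n m : ℕ) [NeZero n] [NeZero m] (hn : Even n) (hm : Even m) :
    energy n m (checkerboard n m) = 0 ∧
    (∀ c : ZMod n × ZMod m → Bool, energy n m c = 0 →
      c = checkerboard n m ∨ c = fun p => !checkerboard n m p) := by
  constructor
  · apply Finset.sum_eq_zero
    intro p _
    have h1 := val_add_one_parity hn p.1
    have h2 := val_sub_one_parity hn p.1
    have h3 := val_add_one_parity hm p.2
    have h4 := val_sub_one_parity hm p.2
    rw [potential, List.length_eq_zero_iff, List.filter_eq_nil_iff]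
    intro q hq
    simp only [nbrs, List.mem_cons, List.not_mem_nil, or_false] at hq
    rcases hq with rfl | rfl | rfl | rfl <;>
      simp only [checkerboard, beq_iff_eq, decide_eq_decide] <;> omega
  · intro c hc
    have hpot : ∀ p, potential n m c p = 0 := fun p =>
      (Finset.sum_eq_zero_iff).mp hc p (Finset.mem_univ p)
    have hne : ∀ p q, q ∈ nbrs n m p → c q ≠ c p := by
      intro p q hq
      have h0 := hpot p
      rw [potential, List.length_eq_zero_iff, List.filter_eq_nil_iff] at h0
      simpa using h0 q hq
    have hR : ∀ (x : ZMod n) (y : ZMod m), c (x + 1, y) = !c (x, y) := by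
      intro x y
      have h := hne (x, y) (x + 1, y) (by simp [nbrs])
      cases h1 : c (x + 1, y) <;> cases h2 : c (x, y) <;> simp_all
    have hU : ∀ (x : ZMod n) (y : ZMod m), c (x, y + 1) = !c (x, y) := by
      intro x y
      have h := hne (x, y) (x, y + 1) (by simp [nbrs])
      cases h1 : c (x, y + 1) <;> cases h2 : c (x, y) <;> simp_all
    have key : ∀ k l : ℕ,
        c ((k : ZMod n), (l : ZMod m)) = xor (decide ((k + l) % 2 = 1)) (c (0, 0)) := by
      intro k
      induction k with
      | zero =>
        intro l
        induction l with
        | zero => simp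
        | succ l ih =>
          have hcast : ((l + 1 : ℕ) : ZMod m) = (l : ZMod m) + 1 := by push_cast; ring
          rw [hcast, hU, ih]
          have hd : decide ((0 + (l + 1)) % 2 = 1) = !decide ((0 + l) % 2 = 1) := by
            rw [← decide_not, decide_eq_decide]; omega
          rw [hd, bool_xor_not]
      | succ k ih =>
        intro l
        have hcast : ((k + 1 : ℕ) : ZMod n) = (k : ZMod n) + 1 := by push_cast; ring
        rw [hcast, hR, ih]
        have hd : decide ((k + 1 + l) % 2 = 1) = !decide ((k + l) % 2 = 1) := by
          rw [← decide_not, decide_eq_decide]; omega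
        rw [hd, bool_xor_not]
    have hall : ∀ p : ZMod n × ZMod m, c p = xor (checkerboard n m p) (c (0, 0)) := by
      intro p
      have h1 : ((p.1.val : ZMod n)) = p.1 := ZMod.natCast_rightInverse p.1
      have h2 : ((p.2.val : ZMod m)) = p.2 := ZMod.natCast_rightInverse p.2
      have h := key p.1.val p.2.val
      rw [h1, h2] at h
      simpa [checkerboard] using h
    cases hb : c (0, 0)
    · left; funext p; rw [hall p, hb]; simp
    · right; funext p; rw [hall p, hb]; simp
end

section
/- If n and m are both odd, then there is no stable configuration of 2D Minority on the n×m torus. -/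
/-- An odd cycle admits no proper 2-coloring. -/
lemma flip_aux {N : ℕ} [NeZero N] (hN : Odd N) (f : ZMod N → Bool)
    (h : ∀ x, f (x + 1) = ! f x) : False := by
  have key : ∀ k : ℕ, f (k : ZMod N) = xor (decide (Odd k)) (f 0) := by
    intro k
    induction k with
    | zero => simp
    | succ k ih =>
      have : ((k + 1 : ℕ) : ZMod N) = (k : ZMod N) + 1 := by push_cast; ring
      rw [this, h, ih]
      by_cases hk : Odd k <;> simp [hk, Nat.odd_add_one] <;> cases f 0 <;> simp
  have := key N
  rw [ZMod.natCast_self] at this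
  simp [hN] at this

lemma stab_right (n m : ℕ) (c : ZMod n × ZMod m → Bool) (p : ZMod n × ZMod m)
    (h : potential n m c p ≤ 1) (h1 : c (p.1, p.2 + 1) = c p) :
    c (p.1 + 1, p.2) = ! c p := by
  simp only [potential, nbrs, List.filter] at h
  rw [h1] at h
  cases hA : (c (p.1 + 1, p.2) == c p) <;>
  cases hB : (c (p.1 - 1, p.2) == c p) <;>
  cases hC : (c (p.1, p.2 - 1) == c p) <;>
    simp [hA, hB, hC] at h ⊢ <;>
    cases hx : c (p.1 + 1, p.2) <;> cases hy : c p <;> simp_all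

lemma stab_left (n m : ℕ) (c : ZMod n × ZMod m → Bool) (p : ZMod n × ZMod m)
    (h : potential n m c p ≤ 1) (h1 : c (p.1, p.2 - 1) = c p) :
    c (p.1 + 1, p.2) = ! c p := by
  simp only [potential, nbrs, List.filter] at h
  rw [h1] at h
  cases hA : (c (p.1 + 1, p.2) == c p) <;>
  cases hB : (c (p.1 - 1, p.2) == c p) <;>
  cases hC : (c (p.1, p.2 + 1) == c p) <;>
    simp [hA, hB, hC] at h ⊢ <;>
    cases hx : c (p.1 + 1, p.2) <;> cases hy : c p <;> simp_all

/-- If `n` and `m` are both odd, there is no stable configuration: every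
configuration has an active cell, i.e. a cell of potential at least 2. -/
theorem stmt6 (n m : ℕ) [NeZero n] [NeZero m] (hn : Odd n) (hm : Odd m)
    (c : ZMod n × ZMod m → Bool) :
    ∃ p, 2 ≤ potential n m c p := by
  by_contra hcon
  push_neg at hcon
  have hst : ∀ p, potential n m c p ≤ 1 := fun p => Nat.lt_succ_iff.mp (hcon p)
  -- first, row 0 has two adjacent equal cells
  have hrow : ∃ j : ZMod m, c (0, j + 1) = c (0, j) := by
    by_contra hr
    push_neg at hr
    exact flip_aux hm (fun y => c (0, y)) (fun y => by
      have := hr y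
      cases hx : c (0, y + 1) <;> cases hy : c (0, y) <;> simp_all)
  obtain ⟨j, hj⟩ := hrow
  -- the equal pair propagates down, flipping at each step
  have Q : ∀ k : ℕ, c ((k : ZMod n), j + 1) = c ((k : ZMod n), j) := by
    intro k
    induction k with
    | zero => exact_mod_cast hj
    | succ k ih =>
      have h1 : c ((k : ZMod n) + 1, j) = ! c ((k : ZMod n), j) :=
        stab_right n m c ((k : ZMod n), j) (hst _) ih
      have h2 : c ((k : ZMod n) + 1, j + 1) = ! c ((k : ZMod n), j + 1) := by
        have := stab_left n m c ((k : ZMod n), j + 1) (hst _) (by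
          simpa using ih.symm)
        simpa using this
      have hcast : ((k + 1 : ℕ) : ZMod n) = (k : ZMod n) + 1 := by push_cast; ring
      rw [hcast, h1, h2, ih]
  -- hence column j is a proper 2-coloring of an odd cycle: contradiction
  refine flip_aux hn (fun x => c (x, j)) (fun x => ?_)
  obtain ⟨k, rfl⟩ := ZMod.natCast_zmod_surjective x
  exact stab_right n m c ((k : ZMod n), j) (hst _) (Q k)
end

section
/- If n or m is even, a configuration on the n×m torus is stable for 2D Minority if and only if it is a juxtaposition of horizontal bands or of vertical bands, each band of width at least 2 and tiled by a checkerboard pattern (i.e., within each band adjacent cells are in opposite states, and adjacent cells across band boundaries are in the same state arranged so that every cell has potential at most 1). -/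
/-- The configuration is a juxtaposition of horizontal bands of rows, each of width
at least 2 and checkerboard-tiled: there are no borders in the column direction, the
borders in the row direction form full straight lines, and no two such border lines
are adjacent (which is exactly the width-at-least-2 condition). -/
def horizontalBands (n m : ℕ) (c : ZMod n × ZMod m → Bool) : Prop :=
  (∀ p : ZMod n × ZMod m, c p ≠ c (p.1, p.2 + 1)) ∧
  (∀ (i : ZMod n) (j j' : ZMod m), (c (i, j) = c (i + 1, j)) ↔ (c (i, j') = c (i + 1, j'))) ∧
  (∀ (i : ZMod n) (j : ZMod m), ¬(c (i, j) = c (i + 1, j) ∧ c (i + 1, j) = c (i + 2, j)))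

/-- Same with vertical bands of columns. -/
def verticalBands (n m : ℕ) (c : ZMod n × ZMod m → Bool) : Prop :=
  (∀ p : ZMod n × ZMod m, c p ≠ c (p.1 + 1, p.2)) ∧
  (∀ (j : ZMod m) (i i' : ZMod n), (c (i, j) = c (i, j + 1)) ↔ (c (i', j) = c (i', j + 1))) ∧
  (∀ (i : ZMod n) (j : ZMod m), ¬(c (i, j) = c (i, j + 1) ∧ c (i, j + 1) = c (i, j + 2)))

lemma pot_le_one_iff (n m : ℕ) (c : ZMod n × ZMod m → Bool) (p : ZMod n × ZMod m) :
    potential n m c p ≤ 1 ↔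
      (¬(c (p.1+1,p.2) = c p ∧ c (p.1-1,p.2) = c p) ∧
       ¬(c (p.1+1,p.2) = c p ∧ c (p.1,p.2+1) = c p) ∧
       ¬(c (p.1+1,p.2) = c p ∧ c (p.1,p.2-1) = c p) ∧
       ¬(c (p.1-1,p.2) = c p ∧ c (p.1,p.2+1) = c p) ∧
       ¬(c (p.1-1,p.2) = c p ∧ c (p.1,p.2-1) = c p) ∧
       ¬(c (p.1,p.2+1) = c p ∧ c (p.1,p.2-1) = c p)) := by
  simp only [potential, nbrs, List.filter]
  cases h1 : (c (p.1+1,p.2) == c p) <;> cases h2 : (c (p.1-1,p.2) == c p) <;>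
    cases h3 : (c (p.1,p.2+1) == c p) <;> cases h4 : (c (p.1,p.2-1) == c p) <;>
      simp_all

lemma zmod_ind {n : ℕ} [NeZero n] (P : ZMod n → Prop) (j0 : ZMod n)
    (base : P j0) (step : ∀ j, P j → P (j + 1)) : ∀ j, P j := by
  have key : ∀ k : ℕ, P (j0 + (k : ZMod n)) := by
    intro k
    induction k with
    | zero => simpa using base
    | succ k ih =>
        have := step _ ih
        rwa [show ((k+1 : ℕ) : ZMod n) = (k : ZMod n) + 1 by push_cast; ring, ← add_assoc]
  intro j
  obtain ⟨k, hk⟩ := ZMod.natCast_zmod_surjective (n := n) (j - j0)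
  have hj : j = j0 + (k : ZMod n) := by rw [hk]; ring
  rw [hj]; exact key k

section
set_option linter.unusedSectionVars false
variable {n m : ℕ} [NeZero n] [NeZero m] {c : ZMod n × ZMod m → Bool}

lemma excl (hs : ∀ p, potential n m c p ≤ 1) (i : ZMod n) (j : ZMod m) :
      (¬(c (i+1,j) = c (i,j) ∧ c (i-1,j) = c (i,j)) ∧
       ¬(c (i+1,j) = c (i,j) ∧ c (i,j+1) = c (i,j)) ∧
       ¬(c (i+1,j) = c (i,j) ∧ c (i,j-1) = c (i,j)) ∧
       ¬(c (i-1,j) = c (i,j) ∧ c (i,j+1) = c (i,j)) ∧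
       ¬(c (i-1,j) = c (i,j) ∧ c (i,j-1) = c (i,j)) ∧
       ¬(c (i,j+1) = c (i,j) ∧ c (i,j-1) = c (i,j))) :=
  (pot_le_one_iff n m c (i,j)).1 (hs (i,j))

lemma Hstep (hs : ∀ p, potential n m c p ≤ 1) (i : ZMod n) (j : ZMod m)
    (hb : c (i,j) = c (i+1,j)) : c (i,j+1) = c (i+1,j+1) := by
  have h1 : c (i,j+1) ≠ c (i,j) := fun hc => ((excl hs i j).2.1) ⟨hb.symm, hc⟩
  have h2 : c (i+1,j+1) ≠ c (i+1,j) := by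
    have e := (excl hs (i+1) j).2.2.2.1
    have hb' : c (i+1-1,j) = c (i+1,j) := by simpa using hb
    exact fun hc => e ⟨hb', hc⟩
  cases hx : c (i,j) <;> cases hy : c (i,j+1) <;> cases hz : c (i+1,j+1) <;> simp_all

lemma Hline (hs : ∀ p, potential n m c p ≤ 1) (i : ZMod n) (j : ZMod m)
    (hb : c (i,j) = c (i+1,j)) : ∀ j', c (i,j') = c (i+1,j') :=
  zmod_ind (fun j' => c (i,j') = c (i+1,j')) j hb (fun j' h => Hstep hs i j' h)

lemma Vstep (hs : ∀ p, potential n m c p ≤ 1) (i : ZMod n) (j : ZMod m)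
    (hb : c (i,j) = c (i,j+1)) : c (i+1,j) = c (i+1,j+1) := by
  have h1 : c (i+1,j) ≠ c (i,j) := fun hc => ((excl hs i j).2.1) ⟨hc, hb.symm⟩
  have h2 : c (i+1,j+1) ≠ c (i,j+1) := by
    have e := (excl hs i (j+1)).2.2.1
    have hb' : c (i,j+1-1) = c (i,j+1) := by simpa using hb
    exact fun hc => e ⟨hc, hb'⟩
  cases hx : c (i,j) <;> cases hy : c (i+1,j) <;> cases hz : c (i+1,j+1) <;> simp_all

lemma Vline (hs : ∀ p, potential n m c p ≤ 1) (i : ZMod n) (j : ZMod m)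
    (hb : c (i,j) = c (i,j+1)) : ∀ i', c (i',j) = c (i',j+1) :=
  zmod_ind (fun i' => c (i',j) = c (i',j+1)) i hb (fun i' h => Vstep hs i' j h)
end


/-- If `n` or `m` is even, a configuration is stable for 2D Minority iff it is a
juxtaposition of horizontal bands or of vertical bands, each band of width at least 2
and tiled by a checkerboard pattern. -/
theorem stmt7 (n m : ℕ) [NeZero n] [NeZero m] (h : Even n ∨ Even m)
    (c : ZMod n × ZMod m → Bool) :
    (∀ p, potential n m c p ≤ 1) ↔
      (horizontalBands n m c ∨ verticalBands n m c) := by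
  constructor
  · intro hs
    by_cases hH : ∃ i j, c (i,j) = c (i+1,j)
    · left
      obtain ⟨i0, j0, hb⟩ := hH
      refine ⟨?_, ?_, ?_⟩
      · rintro ⟨a, b⟩ hc
        have hv := Vline hs a b hc i0
        have hh := Hline hs i0 j0 hb b
        exact (excl hs i0 b).2.1 ⟨hh.symm, hv.symm⟩
      · intro i j j'
        exact ⟨fun hb' => Hline hs i j hb' j', fun hb' => Hline hs i j' hb' j⟩
      · rintro i j ⟨h1, h2⟩
        refine (excl hs (i+1) j).1 ⟨?_, ?_⟩
        · rw [show i+1+1 = i+2 by ring]; exact h2.symm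
        · show c (i+1-1, j) = c (i+1, j); simpa using h1
    · right
      push_neg at hH
      refine ⟨?_, ?_, ?_⟩
      · rintro ⟨a, b⟩; exact hH a b
      · intro j i i'
        exact ⟨fun hb' => Vline hs i j hb' i', fun hb' => Vline hs i' j hb' i⟩
      · rintro i j ⟨h1, h2⟩
        refine (excl hs i (j+1)).2.2.2.2.2 ⟨?_, ?_⟩
        · rw [show j+1+1 = j+2 by ring]; exact h2.symm
        · show c (i, j+1-1) = c (i, j+1); simpa using h1
  · rintro (⟨h1, h2, h3⟩ | ⟨h1, h2, h3⟩) ⟨a, b⟩ <;> rw [pot_le_one_iff] <;> simp only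
    · have e3f : c (a, b+1) ≠ c (a, b) := fun hc => h1 (a, b) hc.symm
      have e4f : c (a, b-1) ≠ c (a, b) := by
        have := h1 (a, b-1)
        simp only [sub_add_cancel] at this
        exact fun hc => this hc
      have e12 : ¬(c (a+1, b) = c (a, b) ∧ c (a-1, b) = c (a, b)) := by
        rintro ⟨p1, p2⟩
        have := h3 (a-1) b
        rw [show a-1+1 = a by ring, show a-1+2 = a+1 by ring] at this
        exact this ⟨p2, p1.symm⟩
      exact ⟨e12, fun q => e3f q.2, fun q => e4f q.2, fun q => e3f q.2,
        fun q => e4f q.2, fun q => e3f q.1⟩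
    · have e1f : c (a+1, b) ≠ c (a, b) := fun hc => h1 (a, b) hc.symm
      have e2f : c (a-1, b) ≠ c (a, b) := by
        have := h1 (a-1, b)
        simp only [sub_add_cancel] at this
        exact fun hc => this hc
      have e34 : ¬(c (a, b+1) = c (a, b) ∧ c (a, b-1) = c (a, b)) := by
        rintro ⟨p1, p2⟩
        have := h3 a (b-1)
        rw [show b-1+1 = b by ring, show b-1+2 = b+1 by ring] at this
        exact this ⟨p2, p1.symm⟩
      exact ⟨fun q => e1f q.1, fun q => e1f q.1, fun q => e1f q.1,
        fun q => e2f q.1, fun q => e2f q.1, e34⟩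
end

section
/- In any stable configuration of 2D Minority on the torus, the borders form straight lines: if the edge between (i,j) and (i+1,j) is a border (the two cells are in the same state), then for every j' the edge between (i,j') and (i+1,j') is also a border. -/
lemma step_aux (n m : ℕ) [NeZero n] [NeZero m] (c : ZMod n × ZMod m → Bool)
    (hstable : ∀ p, potential n m c p ≤ 1)
    (i : ZMod n) (j : ZMod m) (hborder : c (i, j) = c (i + 1, j)) :
    c (i, j + 1) = c (i + 1, j + 1) := by
  have hA : c (i, j + 1) ≠ c (i, j) := by
    intro heq
    have h := hstable (i, j)
    simp only [potential, nbrs, List.filter, heq, hborder.symm, beq_self_eq_true] at h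
    split at h <;> split at h <;> simp_all
  have hB : c (i + 1, j + 1) ≠ c (i + 1, j) := by
    intro heq
    have h := hstable (i + 1, j)
    simp only [potential, nbrs, List.filter, heq, hborder, beq_self_eq_true] at h
    split at h <;> split at h <;> simp_all
  cases hc : c (i, j) <;> cases hd : c (i, j+1) <;>
    cases he : c (i+1, j+1) <;> simp_all

/-- In a stable configuration, borders form straight lines: if the edge between
`(i,j)` and `(i+1,j)` is a border, then so is the edge between `(i,j')` and
`(i+1,j')` for every `j'`. -/
theorem stmt8 (n m : ℕ) [NeZero n] [NeZero m] (c : ZMod n × ZMod m → Bool)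
    (hstable : ∀ p, potential n m c p ≤ 1)
    (i : ZMod n) (j : ZMod m) (hborder : c (i, j) = c (i + 1, j)) :
    ∀ j' : ZMod m, c (i, j') = c (i + 1, j') := by
  have key : ∀ k : ℕ, c (i, j + k) = c (i + 1, j + k) := by
    intro k
    induction k with
    | zero => simpa using hborder
    | succ k ih =>
      have := step_aux n m c hstable i (j + k) ih
      push_cast
      rw [← add_assoc]
      exact this
  intro j'
  have := key (j' - j).val
  rwa [ZMod.natCast_val, ZMod.cast_id, add_sub_cancel] at this
end

section
/- If a configuration c on the n×m torus (n,m even) has energy E(c) > 5nm/3, then c contains a cell of potential ≥ 3, or two adjacent cells of potential 2 in opposite states. -/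
section Aux

variable (n m : ℕ) [NeZero n] [NeZero m] (c : ZMod n × ZMod m → Bool)

/-- indicator: neighbor `q` of `p` has opposite state and potential 2 -/
def dd (p q : ZMod n × ZMod m) : ℕ :=
  if c p = c q then 0 else if potential n m c q = 2 then 1 else 0

/-- total charge sent away from `p` -/
def ss (p : ZMod n × ZMod m) : ℕ :=
  dd n m c p (p.1 + 1, p.2) + dd n m c p (p.1 - 1, p.2) +
  dd n m c p (p.1, p.2 + 1) + dd n m c p (p.1, p.2 - 1)

lemma dd_le_one (p q : ZMod n × ZMod m) : dd n m c p q ≤ 1 := by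
  unfold dd; split_ifs <;> omega

lemma dd_eq_zero {p q : ZMod n × ZMod m}
    (h : c p ≠ c q → potential n m c q ≠ 2) : dd n m c p q = 0 := by
  unfold dd
  split_ifs with h1 h2
  · rfl
  · exact absurd h2 (h h1)
  · rfl

lemma pot_eq (p : ZMod n × ZMod m) :
    potential n m c p =
      (if c (p.1 + 1, p.2) = c p then 1 else 0) +
      (if c (p.1 - 1, p.2) = c p then 1 else 0) +
      (if c (p.1, p.2 + 1) = c p then 1 else 0) +
      (if c (p.1, p.2 - 1) = c p then 1 else 0) := by
  simp only [potential, nbrs, List.filter_cons, List.filter_nil, beq_iff_eq]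
  split_ifs <;> simp_all

lemma shift_sum1 (f : ZMod n × ZMod m → ℕ) :
    ∑ p : ZMod n × ZMod m, f (p.1 + 1, p.2) = ∑ p : ZMod n × ZMod m, f p :=
  Fintype.sum_bijective (fun p : ZMod n × ZMod m => (p.1 + 1, p.2))
    ((Equiv.prodCongr (Equiv.addRight (1 : ZMod n)) (Equiv.refl (ZMod m))).bijective)
    _ f (fun _ => rfl)

lemma shift_sum2 (f : ZMod n × ZMod m → ℕ) :
    ∑ p : ZMod n × ZMod m, f (p.1 - 1, p.2) = ∑ p : ZMod n × ZMod m, f p :=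
  Fintype.sum_bijective (fun p : ZMod n × ZMod m => (p.1 - 1, p.2))
    ((Equiv.prodCongr (Equiv.subRight (1 : ZMod n)) (Equiv.refl (ZMod m))).bijective)
    _ f (fun _ => rfl)

lemma shift_sum3 (f : ZMod n × ZMod m → ℕ) :
    ∑ p : ZMod n × ZMod m, f (p.1, p.2 + 1) = ∑ p : ZMod n × ZMod m, f p :=
  Fintype.sum_bijective (fun p : ZMod n × ZMod m => (p.1, p.2 + 1))
    ((Equiv.prodCongr (Equiv.refl (ZMod n)) (Equiv.addRight (1 : ZMod m))).bijective)
    _ f (fun _ => rfl)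

lemma shift_sum4 (f : ZMod n × ZMod m → ℕ) :
    ∑ p : ZMod n × ZMod m, f (p.1, p.2 - 1) = ∑ p : ZMod n × ZMod m, f p :=
  Fintype.sum_bijective (fun p : ZMod n × ZMod m => (p.1, p.2 - 1))
    ((Equiv.prodCongr (Equiv.refl (ZMod n)) (Equiv.subRight (1 : ZMod m))).bijective)
    _ f (fun _ => rfl)

/-- received charge at `q`, after reindexing -/
def rr (q : ZMod n × ZMod m) : ℕ :=
  dd n m c (q.1 - 1, q.2) q + dd n m c (q.1 + 1, q.2) q +
  dd n m c (q.1, q.2 - 1) q + dd n m c (q.1, q.2 + 1) q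

lemma sum_ss_eq_sum_rr :
    ∑ p : ZMod n × ZMod m, ss n m c p = ∑ q : ZMod n × ZMod m, rr n m c q := by
  simp only [ss, rr, Finset.sum_add_distrib]
  congr 1
  · congr 1
    · congr 1
      · rw [← shift_sum1 n m (fun q => dd n m c (q.1 - 1, q.2) q)]
        exact Finset.sum_congr rfl (fun p _ => by simp [add_sub_cancel_right])
      · rw [← shift_sum2 n m (fun q => dd n m c (q.1 + 1, q.2) q)]
        exact Finset.sum_congr rfl (fun p _ => by simp [sub_add_cancel])
    · rw [← shift_sum3 n m (fun q => dd n m c (q.1, q.2 - 1) q)]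
      exact Finset.sum_congr rfl (fun p _ => by simp [add_sub_cancel_right])
  · rw [← shift_sum4 n m (fun q => dd n m c (q.1, q.2 + 1) q)]
    exact Finset.sum_congr rfl (fun p _ => by simp [sub_add_cancel])

lemma rr_eq (q : ZMod n × ZMod m) :
    rr n m c q = if potential n m c q = 2 then 2 else 0 := by
  have hp := pot_eq n m c q
  by_cases hq : potential n m c q = 2
  · simp only [rr, dd, hq, if_true]
    rw [hq] at hp
    split_ifs at hp ⊢ <;> omega
  · simp only [rr, dd, hq, if_false, ite_self]
end Aux

/-- If the energy of a configuration on an even torus exceeds `5nm/3`, then the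
configuration contains a cell of potential at least 3, or two adjacent cells of
potential 2 in opposite states. -/
theorem stmt9 (n m : ℕ) [NeZero n] [NeZero m] (hn : Even n) (hm : Even m)
    (c : ZMod n × ZMod m → Bool) (hE : 5 * (n * m) < 3 * energy n m c) :
    (∃ p, 3 ≤ potential n m c p) ∨
    (∃ p q, q ∈ nbrs n m p ∧ potential n m c p = 2 ∧ potential n m c q = 2 ∧
      c p ≠ c q) := by
  by_contra hcon
  push_neg at hcon
  obtain ⟨h1, h2⟩ := hcon
  have key : ∀ p : ZMod n × ZMod m,
      6 * potential n m c p + ss n m c p ≤ 10 + (if potential n m c p = 2 then 2 else 0) := by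
    intro p
    have hle : potential n m c p ≤ 2 := by
      have := h1 p; omega
    by_cases hp : potential n m c p = 2
    · have hmem : ∀ q, q ∈ nbrs n m p → c p ≠ c q → potential n m c q ≠ 2 := by
        intro q hq hne hq2
        exact hne (h2 p q hq hp hq2)
      have hs : ss n m c p = 0 := by
        unfold ss
        rw [dd_eq_zero n m c (hmem _ (by simp [nbrs])),
          dd_eq_zero n m c (hmem _ (by simp [nbrs])),
          dd_eq_zero n m c (hmem _ (by simp [nbrs])),
          dd_eq_zero n m c (hmem _ (by simp [nbrs]))]
      simp [hp, hs]
    · have hs : ss n m c p ≤ 4 := by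
        unfold ss
        have := dd_le_one n m c p (p.1 + 1, p.2)
        have := dd_le_one n m c p (p.1 - 1, p.2)
        have := dd_le_one n m c p (p.1, p.2 + 1)
        have := dd_le_one n m c p (p.1, p.2 - 1)
        omega
      simp only [hp, if_false]
      omega
  have hsum : ∑ p : ZMod n × ZMod m, (6 * potential n m c p + ss n m c p)
      ≤ ∑ p : ZMod n × ZMod m, (10 + (if potential n m c p = 2 then 2 else 0)) :=
    Finset.sum_le_sum (fun p _ => key p)
  have hss : ∑ p : ZMod n × ZMod m, ss n m c p
      = ∑ p : ZMod n × ZMod m, (if potential n m c p = 2 then 2 else 0) := by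
    rw [sum_ss_eq_sum_rr]
    exact Finset.sum_congr rfl (fun q _ => rr_eq n m c q)
  rw [Finset.sum_add_distrib, Finset.sum_add_distrib, hss, ← Finset.mul_sum] at hsum
  have hcard : ∑ _p : ZMod n × ZMod m, (10 : ℕ) = (n * m) * 10 := by
    rw [Finset.sum_const, smul_eq_mul, Finset.card_univ, Fintype.card_prod,
      ZMod.card, ZMod.card]
  rw [hcard] at hsum
  unfold energy at hE
  omega
end

section
/- If in a configuration c every cell of potential 2 has its two opposite-state neighbors of potential ≤ 1, no two adjacent cells of potential 2 are in opposite states, and no cell has potential ≥ 3, then the number of cells of potential 2 is at most 2nm/3. -/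
noncomputable def W (n m : ℕ) (c : ZMod n × ZMod m → Bool)
    (p q : ZMod n × ZMod m) : ℕ :=
  if potential n m c p = 2 ∧ c p ≠ c q then 1 else 0

lemma innerSum2 (n m : ℕ) (c : ZMod n × ZMod m → Bool) (p : ZMod n × ZMod m) :
    W n m c p (p.1+1, p.2) + W n m c p (p.1-1, p.2) +
      W n m c p (p.1, p.2+1) + W n m c p (p.1, p.2-1)
      = if potential n m c p = 2 then 2 else 0 := by
  by_cases hp : potential n m c p = 2
  · have h4 : ((nbrs n m p).filter (fun q => c q == c p)).length = 2 := hp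
    simp only [W, hp, if_true, true_and]
    revert h4
    simp only [nbrs, List.filter]
    cases hb : c p <;> cases e1 : c (p.1+1, p.2) <;> cases e2 : c (p.1-1, p.2) <;>
      cases e3 : c (p.1, p.2+1) <;> cases e4 : c (p.1, p.2-1) <;> simp_all
  · simp [W, hp]

lemma swap_sum (n m : ℕ) [NeZero n] [NeZero m] (c : ZMod n × ZMod m → Bool) :
    ∑ p : ZMod n × ZMod m,
      (W n m c p (p.1+1, p.2) + W n m c p (p.1-1, p.2) +
        W n m c p (p.1, p.2+1) + W n m c p (p.1, p.2-1))
    = ∑ q : ZMod n × ZMod m,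
      (W n m c (q.1-1, q.2) q + W n m c (q.1+1, q.2) q +
        W n m c (q.1, q.2-1) q + W n m c (q.1, q.2+1) q) := by
  rw [Finset.sum_add_distrib, Finset.sum_add_distrib, Finset.sum_add_distrib,
      Finset.sum_add_distrib, Finset.sum_add_distrib, Finset.sum_add_distrib]
  congr 1
  congr 1
  congr 1
  · have := Equiv.sum_comp
      ((Equiv.addRight (1 : ZMod n)).prodCongr (Equiv.refl (ZMod m)))
      (fun q : ZMod n × ZMod m => W n m c (q.1-1, q.2) q)
    rw [← this]
    apply Finset.sum_congr rfl
    intro p _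
    simp [Equiv.prodCongr, Equiv.addRight, Prod.map]
  · have := Equiv.sum_comp
      ((Equiv.subRight (1 : ZMod n)).prodCongr (Equiv.refl (ZMod m)))
      (fun q : ZMod n × ZMod m => W n m c (q.1+1, q.2) q)
    rw [← this]
    apply Finset.sum_congr rfl
    intro p _
    simp [Equiv.prodCongr, Equiv.subRight, Prod.map]
  · have := Equiv.sum_comp
      ((Equiv.refl (ZMod n)).prodCongr (Equiv.addRight (1 : ZMod m)))
      (fun q : ZMod n × ZMod m => W n m c (q.1, q.2-1) q)
    rw [← this]
    apply Finset.sum_congr rfl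
    intro p _
    simp [Equiv.prodCongr, Equiv.addRight, Prod.map]
  · have := Equiv.sum_comp
      ((Equiv.refl (ZMod n)).prodCongr (Equiv.subRight (1 : ZMod m)))
      (fun q : ZMod n × ZMod m => W n m c (q.1, q.2+1) q)
    rw [← this]
    apply Finset.sum_congr rfl
    intro p _
    simp [Equiv.prodCongr, Equiv.subRight, Prod.map]

/-- If no cell has potential at least 3, no two adjacent cells of potential 2 are in
opposite states, and every cell of potential 2 has its two opposite-state neighbors of
potential at most 1, then the number of cells of potential 2 is at most `2nm/3`. -/
theorem stmt10 (n m : ℕ) [NeZero n] [NeZero m] (c : ZMod n × ZMod m → Bool)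
    (h3 : ∀ p, potential n m c p ≤ 2)
    (h2 : ∀ p q, q ∈ nbrs n m p → potential n m c p = 2 → potential n m c q = 2 →
      c p = c q)
    (h1 : ∀ p, potential n m c p = 2 → ∀ q ∈ nbrs n m p, c q ≠ c p →
      potential n m c q ≤ 1) :
    3 * (Finset.univ.filter (fun p : ZMod n × ZMod m => potential n m c p = 2)).card
      ≤ 2 * (n * m) := by
  classical
  set A := Finset.univ.filter (fun p : ZMod n × ZMod m => potential n m c p = 2) with hAdef
  have hNcard : Fintype.card (ZMod n × ZMod m) = n * m := by
    simp [Fintype.card_prod, ZMod.card]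
  -- lower bound for S
  have hlow : ∑ p : ZMod n × ZMod m,
      (W n m c p (p.1+1, p.2) + W n m c p (p.1-1, p.2) +
        W n m c p (p.1, p.2+1) + W n m c p (p.1, p.2-1)) = 2 * A.card := by
    rw [Finset.sum_congr rfl (fun p _ => innerSum2 n m c p)]
    rw [← Finset.sum_filter]
    simp [hAdef, mul_comm]
  -- per-q upper bound
  have hq : ∀ q : ZMod n × ZMod m,
      W n m c (q.1-1, q.2) q + W n m c (q.1+1, q.2) q +
        W n m c (q.1, q.2-1) q + W n m c (q.1, q.2+1) q
      ≤ if potential n m c q = 2 then 0 else 4 := by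
    intro q
    by_cases hq2 : potential n m c q = 2
    · have key : ∀ p', q ∈ nbrs n m p' → W n m c p' q = 0 := by
        intro p' hmem
        simp only [W]
        split_ifs with h
        · exfalso
          have := h1 p' h.1 q hmem (fun hcq => h.2 hcq.symm)
          omega
        · rfl
      rw [key, key, key, key] <;> simp [nbrs, hq2, Prod.ext_iff]
    · have hb : ∀ a b, W n m c a b ≤ 1 := by
        intro a b; simp only [W]; split_ifs <;> omega
      have := hb (q.1-1, q.2) q
      have := hb (q.1+1, q.2) q
      have := hb (q.1, q.2-1) q
      have := hb (q.1, q.2+1) q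
      simp only [hq2, if_false]
      omega
  have hup : ∑ q : ZMod n × ZMod m,
      (W n m c (q.1-1, q.2) q + W n m c (q.1+1, q.2) q +
        W n m c (q.1, q.2-1) q + W n m c (q.1, q.2+1) q)
      ≤ 4 * (n * m - A.card) := by
    calc _ ≤ ∑ q : ZMod n × ZMod m, (if potential n m c q = 2 then 0 else 4) :=
          Finset.sum_le_sum (fun q _ => hq q)
      _ = 4 * (n * m - A.card) := by
          rw [Finset.sum_ite]
          simp only [Finset.sum_const_zero, Finset.sum_const, smul_eq_mul, zero_add]
          have hcards := Finset.card_filter_add_card_filter_not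
            (s := (Finset.univ : Finset (ZMod n × ZMod m)))
            (p := fun p => potential n m c p = 2)
          rw [Finset.card_univ, hNcard, ← hAdef] at hcards
          have : (Finset.univ.filter (fun p : ZMod n × ZMod m =>
              ¬ potential n m c p = 2)).card = n * m - A.card := by omega
          rw [this, mul_comm]
  have hAle : A.card ≤ n * m := by
    have := Finset.card_le_card (Finset.filter_subset (fun p : ZMod n × ZMod m => potential n m c p = 2) Finset.univ)
    rwa [Finset.card_univ, hNcard] at this
  have := hlow ▸ (swap_sum n m c ▸ hup)
  omega
end

section
/- If c is a bounded configuration (agreeing with the checkerboard outside an (n−2)×(m−2) rectangle), then the minority update δ of any single cell yields a bounded configuration: every cell outside the rectangle is inactive. -/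
/-- The state of the fired cell and of its four neighbors, summed as natural numbers. -/
def nbhdSum (n m : ℕ) (c : ZMod n × ZMod m → Bool) (p : ZMod n × ZMod m) : ℕ :=
  (if c p then 1 else 0) + (nbrs n m p).countP (fun q => c q)

/-- The minority update of the fired cell: it becomes black iff at most 2 of the five
cells of its neighborhood are black; all other cells are unchanged. -/
def minUpdate (n m : ℕ) (c : ZMod n × ZMod m → Bool) (p : ZMod n × ZMod m) :
    ZMod n × ZMod m → Bool :=
  fun q => if q = p then decide (nbhdSum n m c p ≤ 2) else c q

/-- A configuration is bounded if it agrees with the checkerboard outside the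
(n-2) × (m-2) rectangle with upper-left corner (1,1), i.e. on the two strips of
cells with first coordinate -1 or 0, or second coordinate -1 or 0. -/
def Bounded (n m : ℕ) (c : ZMod n × ZMod m → Bool) : Prop :=
  ∀ p : ZMod n × ZMod m, (p.1 = -1 ∨ p.1 = 0 ∨ p.2 = -1 ∨ p.2 = 0) →
    c p = decide ((p.1.val + p.2.val) % 2 = 1)

section Aux
variable {n : ℕ} [NeZero n]

lemma two_le_of_even' (hn : Even n) : 1 < n := by
  rcases hn with ⟨k, rfl⟩
  have := NeZero.pos (k + k)
  omega

lemma val_add_one_mod_two (hn : Even n) (x : ZMod n) :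
    (x + 1).val % 2 = (x.val + 1) % 2 := by
  haveI : Fact (1 < n) := ⟨two_le_of_even' hn⟩
  rw [ZMod.val_add, ZMod.val_one, Nat.mod_mod_of_dvd _ hn.two_dvd]

lemma val_sub_one_mod_two (hn : Even n) (x : ZMod n) :
    (x - 1).val % 2 = (x.val + 1) % 2 := by
  have h := val_add_one_mod_two hn (x - 1)
  rw [sub_add_cancel] at h
  omega

end Aux

lemma beq_false_of_strip {n m : ℕ} [NeZero n] [NeZero m]
    (c : ZMod n × ZMod m → Bool) (hc : Bounded n m c)
    {p q : ZMod n × ZMod m}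
    (hp : p.1 = -1 ∨ p.1 = 0 ∨ p.2 = -1 ∨ p.2 = 0)
    (hq : q.1 = -1 ∨ q.1 = 0 ∨ q.2 = -1 ∨ q.2 = 0)
    (hpar : (q.1.val + q.2.val) % 2 = (p.1.val + p.2.val + 1) % 2) :
    (c q == c p) = false := by
  rw [hc p hp, hc q hq]
  simp only [beq_eq_false_iff_ne, ne_eq, decide_eq_decide]
  omega

lemma filter_four_le_one {α : Type*} (q1 q2 q3 q4 : α) (f : α → Bool)
    (h : (f q1 = false ∧ f q2 = false ∧ f q3 = false) ∨
         (f q1 = false ∧ f q2 = false ∧ f q4 = false) ∨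
         (f q1 = false ∧ f q3 = false ∧ f q4 = false) ∨
         (f q2 = false ∧ f q3 = false ∧ f q4 = false)) :
    ([q1, q2, q3, q4].filter f).length ≤ 1 := by
  rcases h with ⟨h1, h2, h3⟩ | ⟨h1, h2, h3⟩ | ⟨h1, h2, h3⟩ | ⟨h1, h2, h3⟩ <;>
    simp only [List.filter, h1, h2, h3] <;> split <;> simp

/-- If c is bounded, every cell outside the rectangle is inactive (potential at most
1), and the minority update of any single cell yields a bounded configuration. -/
theorem stmt12 (n m : ℕ) [NeZero n] [NeZero m] (hn : Even n) (hm : Even m)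
    (c : ZMod n × ZMod m → Bool) (hc : Bounded n m c) :
    (∀ p : ZMod n × ZMod m, (p.1 = -1 ∨ p.1 = 0 ∨ p.2 = -1 ∨ p.2 = 0) →
      potential n m c p ≤ 1) ∧
    (∀ p, Bounded n m (minUpdate n m c p)) := by
  have par1 : ∀ p : ZMod n × ZMod m,
      ((p.1 + 1).val + p.2.val) % 2 = (p.1.val + p.2.val + 1) % 2 := by
    intro p; have := val_add_one_mod_two hn p.1; omega
  have par2 : ∀ p : ZMod n × ZMod m,
      ((p.1 - 1).val + p.2.val) % 2 = (p.1.val + p.2.val + 1) % 2 := by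
    intro p; have := val_sub_one_mod_two hn p.1; omega
  have par3 : ∀ p : ZMod n × ZMod m,
      (p.1.val + (p.2 + 1).val) % 2 = (p.1.val + p.2.val + 1) % 2 := by
    intro p; have := val_add_one_mod_two hm p.2; omega
  have par4 : ∀ p : ZMod n × ZMod m,
      (p.1.val + (p.2 - 1).val) % 2 = (p.1.val + p.2.val + 1) % 2 := by
    intro p; have := val_sub_one_mod_two hm p.2; omega
  have H1 : ∀ p : ZMod n × ZMod m, (p.1 = -1 ∨ p.1 = 0 ∨ p.2 = -1 ∨ p.2 = 0) →
      potential n m c p ≤ 1 := by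
    intro p hp
    show (([(p.1 + 1, p.2), (p.1 - 1, p.2), (p.1, p.2 + 1), (p.1, p.2 - 1)]).filter
      (fun q => c q == c p)).length ≤ 1
    apply filter_four_le_one
    have e1 : ∀ h : (p.1 + 1 = -1 ∨ p.1 + 1 = 0 ∨ p.2 = -1 ∨ p.2 = 0),
        (c (p.1 + 1, p.2) == c p) = false := fun h =>
      beq_false_of_strip c hc hp h (par1 p)
    have e2 : ∀ h : (p.1 - 1 = -1 ∨ p.1 - 1 = 0 ∨ p.2 = -1 ∨ p.2 = 0),
        (c (p.1 - 1, p.2) == c p) = false := fun h =>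
      beq_false_of_strip c hc hp h (par2 p)
    have e3 : ∀ h : (p.1 = -1 ∨ p.1 = 0 ∨ p.2 + 1 = -1 ∨ p.2 + 1 = 0),
        (c (p.1, p.2 + 1) == c p) = false := fun h =>
      beq_false_of_strip c hc hp h (par3 p)
    have e4 : ∀ h : (p.1 = -1 ∨ p.1 = 0 ∨ p.2 - 1 = -1 ∨ p.2 - 1 = 0),
        (c (p.1, p.2 - 1) == c p) = false := fun h =>
      beq_false_of_strip c hc hp h (par4 p)
    rcases hp with h | h | h | h
    · -- p.1 = -1 : q1, q3, q4 are strip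
      refine Or.inr (Or.inr (Or.inl ⟨?_, ?_, ?_⟩))
      · exact e1 (Or.inr (Or.inl (by rw [h]; ring)))
      · exact e3 (Or.inl h)
      · exact e4 (Or.inl h)
    · -- p.1 = 0 : q2, q3, q4 are strip
      refine Or.inr (Or.inr (Or.inr ⟨?_, ?_, ?_⟩))
      · exact e2 (Or.inl (by rw [h]; ring))
      · exact e3 (Or.inr (Or.inl h))
      · exact e4 (Or.inr (Or.inl h))
    · -- p.2 = -1 : q1, q2, q3 are strip
      refine Or.inl ⟨?_, ?_, ?_⟩
      · exact e1 (Or.inr (Or.inr (Or.inl h)))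
      · exact e2 (Or.inr (Or.inr (Or.inl h)))
      · exact e3 (Or.inr (Or.inr (Or.inr (by rw [h]; ring))))
    · -- p.2 = 0 : q1, q2, q4 are strip
      refine Or.inr (Or.inl ⟨?_, ?_, ?_⟩)
      · exact e1 (Or.inr (Or.inr (Or.inr h)))
      · exact e2 (Or.inr (Or.inr (Or.inr h)))
      · exact e4 (Or.inr (Or.inr (Or.inl (by rw [h]; ring))))
  refine ⟨H1, ?_⟩
  intro p q hq
  unfold minUpdate
  split
  · rename_i hqp
    subst hqp
    rw [← hc q hq]
    have hpot := H1 q hq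
    unfold potential nbrs at hpot
    unfold nbhdSum nbrs
    cases h1 : c (q.1 + 1, q.2) <;> cases h2 : c (q.1 - 1, q.2) <;>
      cases h3 : c (q.1, q.2 + 1) <;> cases h4 : c (q.1, q.2 - 1) <;>
      cases h5 : c q <;>
      simp_all [List.filter, List.countP, List.countP.go]
  · exact hc q hq
end

section
/- For finite convex subsets R ⊆ R' of Z², the perimeter of R is at most the perimeter of R', where convex means closed under taking horizontal and vertical segments between cells of the set, and R, R' are assumed connected (islands). More generally, if R' is an island and R is a finite convex set contained in R', the sum of the perimeters of the islands (connected components) of R is at most the perimeter of R'. -/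
/-- The four von Neumann neighbors of a cell of the plane. -/
def nbrsZ (p : ℤ × ℤ) : List (ℤ × ℤ) :=
  [(p.1 + 1, p.2), (p.1 - 1, p.2), (p.1, p.2 + 1), (p.1, p.2 - 1)]

/-- A set of cells is convex if it is closed under taking horizontal and vertical
segments between its cells. -/
def IsConvexCells (R : Set (ℤ × ℤ)) : Prop :=
  (∀ a b j : ℤ, (a, j) ∈ R → (b, j) ∈ R → ∀ l, a ≤ l → l ≤ b → (l, j) ∈ R) ∧
  (∀ i a b : ℤ, (i, a) ∈ R → (i, b) ∈ R → ∀ l, a ≤ l → l ≤ b → (i, l) ∈ R)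

/-- Two cells of a set are connected if they are joined by a path of adjacent cells
staying in the set. -/
def ConnIn (R : Set (ℤ × ℤ)) (p q : ℤ × ℤ) : Prop :=
  Relation.ReflTransGen (fun a b => a ∈ R ∧ b ∈ R ∧ b ∈ nbrsZ a) p q

/-- A set is connected (for the von Neumann adjacency) if any two of its cells are
joined by a path inside it. -/
def IsConnCells (R : Set (ℤ × ℤ)) : Prop :=
  ∀ p ∈ R, ∀ q ∈ R, ConnIn R p q

/-- The perimeter of a finite set of cells: the number of pairs (x, y) with x in the
set, y outside it, and x, y adjacent. -/
def perim (R : Finset (ℤ × ℤ)) : ℕ :=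
  ∑ x ∈ R, ((nbrsZ x).filter (fun y => y ∉ R)).length

/-!
A convex set of cells meets every row in an interval and every column in an interval, so each
row it meets contributes exactly one boundary edge on the left and one on the right, and each
column one at the top and one at the bottom. Hence its perimeter is twice the number of rows plus
twice the number of columns it meets, and both numbers can only grow when passing to a superset.
-/

open Finset

def IsRowConvex {β : Type*} (R : Set (ℤ × β)) : Prop :=
  ∀ a b j, (a, j) ∈ R → (b, j) ∈ R → ∀ l, a ≤ l → l ≤ b → (l, j) ∈ R

lemma IsConvexCells.isRowConvex {R : Set (ℤ × ℤ)} (hR : IsConvexCells R) : IsRowConvex R :=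
  hR.1

lemma IsConvexCells.isRowConvex_preimage_swap {R : Set (ℤ × ℤ)} (hR : IsConvexCells R) :
    IsRowConvex (Prod.swap ⁻¹' R) :=
  fun a b j ha hb l hal hlb => hR.2 j a b ha hb l hal hlb

lemma perim_eq_sum_card_boundary (R : Finset (ℤ × ℤ)) :
    perim R = #{x ∈ R | (x.1 + 1, x.2) ∉ R} + #{x ∈ R | (x.1 + -1, x.2) ∉ R} +
      #{x ∈ R | (x.1, x.2 + 1) ∉ R} + #{x ∈ R | (x.1, x.2 + -1) ∉ R} := by
  simp only [perim, card_filter, ← sum_add_distrib]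
  refine sum_congr rfl fun x _ => ?_
  simp only [nbrsZ, ← Int.sub_eq_add_neg]
  split_ifs <;> simp_all

section Rows

variable {β : Type*} {R : Finset (ℤ × β)}

lemma IsRowConvex.mem_of_lt (hR : IsRowConvex (R : Set (ℤ × β))) {a b : ℤ} {j : β}
    (ha : (a, j) ∈ R) (hb : (b, j) ∈ R) (hab : a < b) : (a + 1, j) ∈ R ∧ (b + -1, j) ∈ R :=
  ⟨hR a b j ha hb _ (by omega) (by omega), hR a b j ha hb _ (by omega) (by omega)⟩

lemma IsRowConvex.card_boundary_eq_card_rows [DecidableEq β]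
    (hR : IsRowConvex (R : Set (ℤ × β))) {d : ℤ} (hd : d = 1 ∨ d = -1) :
    #{x ∈ R | (x.1 + d, x.2) ∉ R} = #(R.image Prod.snd) := by
  apply card_nbij Prod.snd (fun x hx => mem_image_of_mem _ (mem_filter.1 hx).1)
  · rintro ⟨a, j⟩ ha ⟨b, j'⟩ hb (rfl : j = j')
    simp only [coe_filter, Set.mem_ofPred_eq] at ha hb
    by_contra hne
    have hab_ne : a ≠ b := by rintro rfl; exact hne rfl
    rcases lt_or_gt_of_ne hab_ne with hab | hab <;>
      rcases hd with rfl | rfl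
    exacts [ha.2 (hR.mem_of_lt ha.1 hb.1 hab).1, hb.2 (hR.mem_of_lt ha.1 hb.1 hab).2,
      hb.2 (hR.mem_of_lt hb.1 ha.1 hab).1, ha.2 (hR.mem_of_lt hb.1 ha.1 hab).2]
  · intro j hj
    obtain ⟨x, hx, rfl⟩ := mem_image.1 (mem_coe.1 hj)
    -- the cell of the row furthest in direction `d`
    obtain ⟨m, hm, hmax⟩ := exists_max_image {y ∈ R | y.2 = x.2} (fun y => d * y.1)
      ⟨x, mem_filter.2 ⟨hx, rfl⟩⟩
    rw [mem_filter] at hm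
    refine ⟨m, mem_filter.2 ⟨hm.1, fun hmem => ?_⟩, hm.2⟩
    have := hmax _ (mem_filter.2 ⟨hmem, hm.2⟩)
    rcases hd with rfl | rfl <;> simp at this

end Rows

lemma IsRowConvex.card_boundary_eq_card_cols {R : Finset (ℤ × ℤ)}
    (hR : IsRowConvex (Prod.swap ⁻¹' (R : Set (ℤ × ℤ)))) {d : ℤ} (hd : d = 1 ∨ d = -1) :
    #{x ∈ R | (x.1, x.2 + d) ∉ R} = #(R.image Prod.fst) := by
  have hS : IsRowConvex ((R.image Prod.swap : Finset (ℤ × ℤ)) : Set (ℤ × ℤ)) := by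
    rwa [coe_image, Set.image_swap_eq_preimage_swap]
  have himage : {x ∈ R | (x.1, x.2 + d) ∉ R}.image Prod.swap =
      {y ∈ R.image Prod.swap | (y.1 + d, y.2) ∉ R.image Prod.swap} := by
    ext ⟨a, b⟩
    simp [and_comm]
  rw [← card_image_of_injective _ Prod.swap_injective, himage,
    hS.card_boundary_eq_card_rows hd, image_image]
  rfl

theorem perim_eq_of_isConvexCells {R : Finset (ℤ × ℤ)} (hR : IsConvexCells (R : Set (ℤ × ℤ))) :
    perim R = 2 * #(R.image Prod.snd) + 2 * #(R.image Prod.fst) := by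
  rw [perim_eq_sum_card_boundary,
    hR.isRowConvex.card_boundary_eq_card_rows (.inl rfl),
    hR.isRowConvex.card_boundary_eq_card_rows (.inr rfl),
    hR.isRowConvex_preimage_swap.card_boundary_eq_card_cols (.inl rfl),
    hR.isRowConvex_preimage_swap.card_boundary_eq_card_cols (.inr rfl)]
  ring

theorem stmt14_general (R R' : Finset (ℤ × ℤ)) (hRR' : R ⊆ R')
    (hR : IsConvexCells (R : Set (ℤ × ℤ)))
    (hR'conv : IsConvexCells (R' : Set (ℤ × ℤ))) :
    perim R ≤ perim R' := by
  rw [perim_eq_of_isConvexCells hR, perim_eq_of_isConvexCells hR'conv]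
  gcongr

/-- If R is a finite convex set of cells contained in an island R' (a finite
connected convex set), then the perimeter of R, which equals the sum of the
perimeters of the islands composing R, is at most the perimeter of R'. -/
theorem stmt14 (R R' : Finset (ℤ × ℤ)) (hRR' : R ⊆ R')
    (hR : IsConvexCells (R : Set (ℤ × ℤ)))
    (hR'conv : IsConvexCells (R' : Set (ℤ × ℤ)))
    (hR'conn : IsConnCells (R' : Set (ℤ × ℤ))) :
    perim R ≤ perim R' :=
  stmt14_general R R' hRR' hR hR'conv
end

section
/- In a convex bounded dual configuration, the rows and columns touched by distinct black islands are pairwise disjoint: if two distinct islands of the decomposition both contain a cell in the same row (or the same column), they are in fact the same island. -/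
lemma mem_nbrsZ_comm {p q : ℤ × ℤ} : q ∈ nbrsZ p ↔ p ∈ nbrsZ q := by
  obtain ⟨p1, p2⟩ := p; obtain ⟨q1, q2⟩ := q
  simp only [nbrsZ, List.mem_cons, Prod.mk.injEq, List.not_mem_nil, or_false]
  omega

lemma ConnIn.symm {R : Set (ℤ × ℤ)} {p q : ℤ × ℤ} (h : ConnIn R p q) : ConnIn R q p :=
  Relation.ReflTransGen.mono (fun _ _ ⟨ha, hb, hab⟩ => ⟨hb, ha, mem_nbrsZ_comm.1 hab⟩) _ _
    (Relation.ReflTransGen.swap _ _ h)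

lemma connIn_of_path {R : Set (ℤ × ℤ)} (f : ℤ → ℤ × ℤ) (hf : ∀ l, f (l + 1) ∈ nbrsZ (f l))
    {a b : ℤ} (hab : a ≤ b) (hR : ∀ l, a ≤ l → l ≤ b → f l ∈ R) : ConnIn R (f a) (f b) := by
  induction b, hab using Int.leInduction with
  | base => exact Relation.ReflTransGen.refl
  | succ b hab ih =>
    exact (ih fun l hal hlb => hR l hal (by omega)).tail
      ⟨hR b hab (by omega), hR (b + 1) (by omega) le_rfl, hf b⟩

lemma IsConvexCells.connIn_of_snd_eq {R : Set (ℤ × ℤ)} (hR : IsConvexCells R)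
    {p q : ℤ × ℤ} (hp : p ∈ R) (hq : q ∈ R) (h : p.2 = q.2) : ConnIn R p q := by
  wlog hle : p.1 ≤ q.1 generalizing p q
  · exact (this hq hp h.symm (by omega)).symm
  obtain ⟨p1, p2⟩ := p; obtain ⟨q1, q2⟩ := q
  obtain rfl : p2 = q2 := h
  exact connIn_of_path (fun l => (l, p2)) (fun l => by simp [nbrsZ]) hle
    (hR.1 p1 q1 p2 hp hq)

lemma IsConvexCells.connIn_of_fst_eq {R : Set (ℤ × ℤ)} (hR : IsConvexCells R)
    {p q : ℤ × ℤ} (hp : p ∈ R) (hq : q ∈ R) (h : p.1 = q.1) : ConnIn R p q := by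
  wlog hle : p.2 ≤ q.2 generalizing p q
  · exact (this hq hp h.symm (by omega)).symm
  obtain ⟨p1, p2⟩ := p; obtain ⟨q1, q2⟩ := q
  obtain rfl : p1 = q1 := h
  exact connIn_of_path (fun l => (p1, l)) (fun l => by simp [nbrsZ]) hle
    (hR.2 p1 p2 q2 hp hq)

theorem stmt16_general (B : Set (ℤ × ℤ)) (hconv : IsConvexCells B)
    (p q : ℤ × ℤ) (hp : p ∈ B) (hq : q ∈ B) (h : p.1 = q.1 ∨ p.2 = q.2) :
    ConnIn B p q :=
  h.elim (hconv.connIn_of_fst_eq hp hq) (hconv.connIn_of_snd_eq hp hq)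

/-- In a finite convex set of black cells, the rows and columns touched by distinct
islands are pairwise disjoint: two cells of the set lying in the same row or in the
same column belong to the same island (connected component). -/
theorem stmt16 (B : Set (ℤ × ℤ)) (hfin : B.Finite) (hconv : IsConvexCells B)
    (p q : ℤ × ℤ) (hp : p ∈ B) (hq : q ∈ B) (h : p.1 = q.1 ∨ p.2 = q.2) :
    ConnIn B p q :=
  stmt16_general B hconv p q hp hq h
end
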